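/- arXiv:2407.10607 — 4 statements merged into one kernel-verified Lean document; each statement's English description precedes it below -/
import Mathlib

section
/- Let 0 < θ ≤ 1 and p ≥ 1. Then for all u ≥ 0, u·(1+u)^{-θ}·((1+u)^p − 1) ≥ (1/(p+1))·((1+u)^{(p+1−θ)/2} − 1)². -/
open Real

theorem stmt_2 (θ p : ℝ) (hθ0 : 0 < θ) (hθ1 : θ ≤ 1) (hp : 1 ≤ p) :
    ∀ u : ℝ, 0 ≤ u →
      u * (1 + u) ^ (-θ) * ((1 + u) ^ p - 1) ≥
        (1 / (p + 1)) * ((1 + u) ^ ((p + 1 - θ) / 2) - 1) ^ 2 := by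
  intro u hu
  set v : ℝ := 1 + u with hv
  have hv1 : 1 ≤ v := by simp [hv, hu]
  have hv0 : (0 : ℝ) < v := by linarith
  set q : ℝ := (p + 1) / 2 with hq
  have hq1 : 1 ≤ q := by rw [hq]; linarith
  have hA : (0 : ℝ) ≤ v ^ q - 1 := by
    have := Real.one_le_rpow hv1 (by linarith : (0:ℝ) ≤ q)
    linarith
  -- Bernoulli tangent line bound: v^q - 1 ≤ q * v^(q-1) * u
  have hber : 1 + q * ((1 - v) / v) ≤ (1 + (1 - v) / v) ^ q := by
    apply one_add_mul_self_le_rpow_one_add _ hq1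
    rw [le_div_iff₀ hv0]
    linarith
  have hone : (1 : ℝ) + (1 - v) / v = v⁻¹ := by field_simp; ring
  have hinv : ((1 : ℝ) + (1 - v) / v) ^ q = (v ^ q)⁻¹ := by
    rw [hone]
    exact Real.inv_rpow hv0.le q
  have hqpos : (0 : ℝ) < v ^ q := Real.rpow_pos_of_pos hv0 q
  have hbv : v ^ (q - 1) * v = v ^ q := by
    conv_rhs => rw [show q = q - 1 + 1 by ring]
    rw [Real.rpow_add hv0, Real.rpow_one]
  have hB1 : v ^ q - 1 ≤ q * (v ^ (q - 1) * u) := by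
    rw [hinv] at hber
    have h2 : (1 + q * ((1 - v) / v)) * v ^ q ≤ 1 := by
      have := mul_le_mul_of_nonneg_right hber hqpos.le
      rwa [inv_mul_cancel₀ hqpos.ne'] at this
    have h3 : (1 + q * ((1 - v) / v)) * v ^ q
        = v ^ q + q * ((1 - v) * v ^ (q - 1)) := by
      field_simp
      linear_combination (q * (v - 1)) * hbv
    rw [h3] at h2
    have huv : q * (v ^ (q - 1) * u) = -(q * ((1 - v) * v ^ (q - 1))) := by
      rw [hv]; ring
    linarith [h2]
  -- second step
  have hbp : v ^ (q - 1) * v ^ q = v ^ p := by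
    rw [← Real.rpow_add hv0]
    congr 1
    rw [hq]; ring
  have hw1 : (1 : ℝ) ≤ v ^ (q - 1) := Real.one_le_rpow hv1 (by linarith)
  have hvp1 : (1 : ℝ) ≤ v ^ p := Real.one_le_rpow hv1 (by linarith)
  have hB2 : q * (v ^ (q - 1) * (v ^ q - 1)) ≤ (p + 1) * (v ^ p - 1) := by
    have : v ^ (q - 1) * (v ^ q - 1) = v ^ p - v ^ (q - 1) := by
      rw [← hbp]; ring
    rw [this, hq]
    nlinarith [hw1, hvp1]
  have hbu : (0 : ℝ) ≤ q * (v ^ (q - 1) * u) := by positivity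
  have hkey : (v ^ q - 1) ^ 2 ≤ (p + 1) * ((v ^ p - 1) * u) :=
    calc (v ^ q - 1) ^ 2 ≤ (q * (v ^ (q - 1) * u)) * (v ^ q - 1) := by
          nlinarith [hB1, hA]
      _ = (q * (v ^ (q - 1) * (v ^ q - 1))) * u := by ring
      _ ≤ ((p + 1) * (v ^ p - 1)) * u := mul_le_mul_of_nonneg_right hB2 hu
      _ = (p + 1) * ((v ^ p - 1) * u) := by ring
  -- identity: v^θ * (v^α - 1)^2 = (v^q - v^(θ/2))^2
  set s : ℝ := v ^ (θ / 2) with hs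
  have hs2 : s * s = v ^ θ := by
    rw [hs, ← Real.rpow_add hv0]; norm_num
  have hst : s * v ^ ((p + 1 - θ) / 2) = v ^ q := by
    rw [hs, ← Real.rpow_add hv0]
    congr 1
    rw [hq]; ring
  have hs1 : (1 : ℝ) ≤ s := Real.one_le_rpow hv1 (by linarith)
  have hsq : s ≤ v ^ q := by
    rw [hs]
    exact Real.rpow_le_rpow_of_exponent_le hv1 (by rw [hq]; linarith)
  have hid : v ^ θ * (v ^ ((p + 1 - θ) / 2) - 1) ^ 2 = (v ^ q - s) ^ 2 := by
    rw [← hs2, ← hst]; ring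
  have hmono : (v ^ q - s) ^ 2 ≤ (v ^ q - 1) ^ 2 := by
    apply pow_le_pow_left₀ (by linarith) (by linarith)
  have hkey2 : v ^ θ * (v ^ ((p + 1 - θ) / 2) - 1) ^ 2
      ≤ (p + 1) * ((v ^ p - 1) * u) := by
    rw [hid]; exact le_trans hmono hkey
  -- finish
  rw [ge_iff_le, Real.rpow_neg hv0.le]
  have hθpos : (0 : ℝ) < v ^ θ := Real.rpow_pos_of_pos hv0 θ
  have hp1 : (0 : ℝ) < p + 1 := by linarith
  rw [div_mul_eq_mul_div, one_mul, div_le_iff₀ hp1]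
  have : u * (v ^ θ)⁻¹ * (v ^ p - 1) * (p + 1) * v ^ θ
      = (p + 1) * ((v ^ p - 1) * u) * ((v ^ θ)⁻¹ * v ^ θ) := by ring
  calc (v ^ ((p + 1 - θ) / 2) - 1) ^ 2
      = v ^ θ * (v ^ ((p + 1 - θ) / 2) - 1) ^ 2 * (v ^ θ)⁻¹ := by
        field_simp
    _ ≤ (p + 1) * ((v ^ p - 1) * u) * (v ^ θ)⁻¹ := by
        apply mul_le_mul_of_nonneg_right hkey2 (by positivity)
    _ = u * (v ^ θ)⁻¹ * (v ^ p - 1) * (p + 1) := by ring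
end

section
/- Let 0 < θ ≤ 1 and p ≥ 1. Define h(t) = (t−1)·t^{−θ}·(t^p − 1) − (1/(p+1))·(t^{(p+1−θ)/2} − 1)² for t ≥ 1. Then h(1) = 0 and h'(t) ≥ 0 for all t ≥ 1, hence h(t) ≥ 0 for all t ≥ 1. -/
open Real

noncomputable def Faux (θ p t : ℝ) : ℝ :=
  (p+1)*(t-1)*(t^p-1) - t^(p+1) + 2*t^((p+1+θ)/2) - t^θ

noncomputable def F1aux (θ p t : ℝ) : ℝ :=
  -(p+1) + p*(p+1)*(t-1)*t^(p-1) + (p+1+θ)*t^((p-1+θ)/2) - θ*t^(θ-1)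

noncomputable def F2aux (θ p t : ℝ) : ℝ :=
  p*(p+1)*(t^(p-1) + (p-1)*(t-1)*t^(p-2))
    + (p+1+θ)*((p-1+θ)/2)*t^((p-3+θ)/2) - θ*(θ-1)*t^(θ-2)

lemma hasDerivAt_Faux (θ p t : ℝ) (ht : 0 < t) :
    HasDerivAt (Faux θ p) (F1aux θ p t) t := by
  have h1 : HasDerivAt (fun x : ℝ => x ^ p) (p * t ^ (p-1)) t :=
    Real.hasDerivAt_rpow_const (Or.inl ht.ne')
  have h2 : HasDerivAt (fun x : ℝ => x ^ (p+1)) ((p+1) * t ^ (p+1-1)) t :=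
    Real.hasDerivAt_rpow_const (Or.inl ht.ne')
  have h3 : HasDerivAt (fun x : ℝ => x ^ ((p+1+θ)/2)) (((p+1+θ)/2) * t ^ ((p+1+θ)/2-1)) t :=
    Real.hasDerivAt_rpow_const (Or.inl ht.ne')
  have h4 : HasDerivAt (fun x : ℝ => x ^ θ) (θ * t ^ (θ-1)) t :=
    Real.hasDerivAt_rpow_const (Or.inl ht.ne')
  have hlin : HasDerivAt (fun x : ℝ => (p+1)*(x-1)) (p+1) t := by
    simpa using ((hasDerivAt_id t).sub_const 1).const_mul (p+1)
  have hprod : HasDerivAt (fun x : ℝ => (p+1)*(x-1)*(x^p-1))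
      ((p+1)*(t^p-1) + (p+1)*(t-1)*(p*t^(p-1))) t := by
    have := hlin.mul (h1.sub_const 1)
    refine this.congr_deriv ?_
    try ring
  have H := ((hprod.sub h2).add ((h3.const_mul 2))).sub h4
  have e1 : p + 1 - 1 = p := by ring
  have e2 : (p+1+θ)/2 - 1 = (p-1+θ)/2 := by ring
  rw [e1, e2] at H
  refine H.congr_deriv ?_
  unfold F1aux
  try ring

lemma hasDerivAt_F1aux (θ p t : ℝ) (ht : 0 < t) :
    HasDerivAt (F1aux θ p) (F2aux θ p t) t := by
  have h1 : HasDerivAt (fun x : ℝ => x ^ (p-1)) ((p-1) * t ^ (p-1-1)) t :=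
    Real.hasDerivAt_rpow_const (Or.inl ht.ne')
  have h3 : HasDerivAt (fun x : ℝ => x ^ ((p-1+θ)/2)) (((p-1+θ)/2) * t ^ ((p-1+θ)/2-1)) t :=
    Real.hasDerivAt_rpow_const (Or.inl ht.ne')
  have h4 : HasDerivAt (fun x : ℝ => x ^ (θ-1)) ((θ-1) * t ^ (θ-1-1)) t :=
    Real.hasDerivAt_rpow_const (Or.inl ht.ne')
  have hlin : HasDerivAt (fun x : ℝ => p*(p+1)*(x-1)) (p*(p+1)) t := by
    simpa using ((hasDerivAt_id t).sub_const 1).const_mul (p*(p+1))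
  have hprod : HasDerivAt (fun x : ℝ => p*(p+1)*(x-1)*x^(p-1))
      (p*(p+1)*t^(p-1) + p*(p+1)*(t-1)*((p-1)*t^(p-1-1))) t := by
    have := hlin.mul h1
    refine this.congr_deriv ?_
    try ring
  have H := (((hasDerivAt_const t (-(p+1))).add hprod).add (h3.const_mul (p+1+θ))).sub
    (h4.const_mul θ)
  have e1 : p - 1 - 1 = p - 2 := by ring
  have e2 : (p-1+θ)/2 - 1 = (p-3+θ)/2 := by ring
  have e3 : θ - 1 - 1 = θ - 2 := by ring
  rw [e1, e2, e3] at H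
  refine H.congr_deriv ?_
  unfold F2aux
  try ring

lemma mono_aux (f f' : ℝ → ℝ) (hf : ∀ t, (0:ℝ) < t → HasDerivAt f (f' t) t)
    (hf' : ∀ t, (1:ℝ) ≤ t → 0 ≤ f' t) : ∀ t, (1:ℝ) ≤ t → f 1 ≤ f t := by
  intro t ht
  have hmono : MonotoneOn f (Set.Ici (1:ℝ)) := by
    apply monotoneOn_of_deriv_nonneg (convex_Ici 1)
    · intro x hx
      exact (hf x (lt_of_lt_of_le one_pos hx)).continuousAt.continuousWithinAt
    · intro x hx
      rw [interior_Ici] at hx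
      exact ((hf x (lt_trans one_pos hx)).differentiableAt.differentiableWithinAt)
    · intro x hx
      rw [interior_Ici] at hx
      have hx1 : (1:ℝ) < x := hx
      rw [(hf x (lt_trans one_pos hx1)).deriv]
      exact hf' x hx1.le
  exact hmono (Set.self_mem_Ici) ht (by exact ht)

lemma F2aux_nonneg (θ p : ℝ) (hθ0 : 0 < θ) (hθ1 : θ ≤ 1) (hp : 1 ≤ p)
    (t : ℝ) (ht : 1 ≤ t) : 0 ≤ F2aux θ p t := by
  have ht0 : (0:ℝ) < t := lt_of_lt_of_le one_pos ht
  have r1 : (0:ℝ) ≤ t ^ (p-1) := (rpow_pos_of_pos ht0 _).le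
  have r2 : (0:ℝ) ≤ t ^ (p-2) := (rpow_pos_of_pos ht0 _).le
  have r3 : (0:ℝ) ≤ t ^ ((p-3+θ)/2) := (rpow_pos_of_pos ht0 _).le
  have r4 : (0:ℝ) ≤ t ^ (θ-2) := (rpow_pos_of_pos ht0 _).le
  unfold F2aux
  have h1 : 0 ≤ p*(p+1)*(t^(p-1) + (p-1)*(t-1)*t^(p-2)) := by
    apply mul_nonneg (by nlinarith)
    have : 0 ≤ (p-1)*(t-1)*t^(p-2) := by
      apply mul_nonneg (mul_nonneg (by linarith) (by linarith)) r2
    linarith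
  have h2 : 0 ≤ (p+1+θ)*((p-1+θ)/2)*t^((p-3+θ)/2) := by
    apply mul_nonneg (mul_nonneg (by linarith) (by linarith)) r3
  have h3 : θ*(θ-1)*t^(θ-2) ≤ 0 := by
    apply mul_nonpos_of_nonpos_of_nonneg _ r4
    nlinarith
  linarith

lemma F1aux_nonneg (θ p : ℝ) (hθ0 : 0 < θ) (hθ1 : θ ≤ 1) (hp : 1 ≤ p)
    (t : ℝ) (ht : 1 ≤ t) : 0 ≤ F1aux θ p t := by
  have key := mono_aux (F1aux θ p) (F2aux θ p)
    (fun s hs => hasDerivAt_F1aux θ p s hs)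
    (fun s hs => F2aux_nonneg θ p hθ0 hθ1 hp s hs) t ht
  have h1 : F1aux θ p 1 = 0 := by
    unfold F1aux
    simp [Real.one_rpow]
    ring
  linarith

lemma Faux_nonneg (θ p : ℝ) (hθ0 : 0 < θ) (hθ1 : θ ≤ 1) (hp : 1 ≤ p)
    (t : ℝ) (ht : 1 ≤ t) : 0 ≤ Faux θ p t := by
  have key := mono_aux (Faux θ p) (F1aux θ p)
    (fun s hs => hasDerivAt_Faux θ p s hs)
    (fun s hs => F1aux_nonneg θ p hθ0 hθ1 hp s hs) t ht
  have h1 : Faux θ p 1 = 0 := by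
    unfold Faux
    simp [Real.one_rpow]
    ring
  linarith

lemma Gaux_nonneg (θ p : ℝ) (hθ0 : 0 < θ) (hθ1 : θ ≤ 1) (hp : 1 ≤ p)
    (t : ℝ) (ht : 1 ≤ t) : 0 ≤ t * F1aux θ p t - θ * Faux θ p t := by
  have key := mono_aux (fun s => s * F1aux θ p s - θ * Faux θ p s)
    (fun s => (F1aux θ p s + s * F2aux θ p s) - θ * F1aux θ p s)
    (fun s hs => by
      exact (((hasDerivAt_id s).mul (hasDerivAt_F1aux θ p s hs)).sub
        ((hasDerivAt_Faux θ p s hs).const_mul θ)).congr_deriv (by simp only [id_eq]; ring)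
      )
    (fun s hs => by
      have h1 := F1aux_nonneg θ p hθ0 hθ1 hp s hs
      have h2 := F2aux_nonneg θ p hθ0 hθ1 hp s hs
      have hs0 : (0:ℝ) ≤ s := by linarith
      show 0 ≤ F1aux θ p s + s * F2aux θ p s - θ * F1aux θ p s
      nlinarith [mul_nonneg hs0 h2, mul_nonneg (sub_nonneg.mpr hθ1) h1]) t ht
  have h1 : F1aux θ p 1 = 0 := by unfold F1aux; simp [Real.one_rpow]; ring
  have h2 : Faux θ p 1 = 0 := by unfold Faux; simp [Real.one_rpow]; ring
  simp only [h1, h2, mul_zero, one_mul, sub_zero] at key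
  linarith [key]

lemma h_eq (θ p t : ℝ) (ht : 0 < t) (hp : 1 ≤ p) :
    (t - 1) * t ^ (-θ) * (t ^ p - 1)
      - (1 / (p + 1)) * (t ^ ((p + 1 - θ) / 2) - 1) ^ 2
    = Faux θ p t * t ^ (-θ) / (p + 1) := by
  have e1 : t ^ (p+1) * t ^ (-θ) = t ^ (p+1-θ) := by
    rw [← Real.rpow_add ht]; ring_nf
  have e2 : t ^ ((p+1+θ)/2) * t ^ (-θ) = t ^ ((p+1-θ)/2) := by
    rw [← Real.rpow_add ht]; ring_nf
  have e3 : t ^ θ * t ^ (-θ) = 1 := by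
    rw [← Real.rpow_add ht]; simp
  have e4 : (t ^ ((p+1-θ)/2)) ^ 2 = t ^ (p+1-θ) := by
    rw [sq, ← Real.rpow_add ht]; ring_nf
  unfold Faux
  have hp0 : p + 1 ≠ 0 := by linarith
  field_simp
  linear_combination e1 - 2*e2 + e3 - e4

theorem stmt_3 (θ p : ℝ) (hθ0 : 0 < θ) (hθ1 : θ ≤ 1) (hp : 1 ≤ p)
    (h : ℝ → ℝ)
    (hh : ∀ t : ℝ,
      h t = (t - 1) * t ^ (-θ) * (t ^ p - 1)
            - (1 / (p + 1)) * (t ^ ((p + 1 - θ) / 2) - 1) ^ 2) :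
    h 1 = 0 ∧ (∀ t, 1 ≤ t → 0 ≤ deriv h t) ∧ (∀ t, 1 ≤ t → 0 ≤ h t) := by
  refine ⟨?_, ?_, ?_⟩
  · rw [hh]; simp [Real.one_rpow]
  · intro t ht
    have ht0 : (0:ℝ) < t := lt_of_lt_of_le one_pos ht
    have heq : h =ᶠ[nhds t] fun x => Faux θ p x * x ^ (-θ) / (p + 1) := by
      filter_upwards [IsOpen.mem_nhds isOpen_Ioi ht0] with x hx
      rw [hh x]
      exact h_eq θ p x hx hp
    have hd : HasDerivAt (fun x => Faux θ p x * x ^ (-θ) / (p + 1))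
        ((F1aux θ p t * t ^ (-θ) + Faux θ p t * (-θ * t ^ (-θ - 1))) / (p + 1)) t := by
      exact ((hasDerivAt_Faux θ p t ht0).mul
        (Real.hasDerivAt_rpow_const (Or.inl ht0.ne'))).div_const (p + 1)
    have hdh := hd.congr_of_eventuallyEq heq
    rw [hdh.deriv]
    have e : t ^ (-θ) = t * t ^ (-θ - 1) := by
      have h2 := Real.rpow_add ht0 1 (-θ - 1)
      rw [Real.rpow_one] at h2
      rw [← h2]
      ring_nf
    rw [e]
    have key := Gaux_nonneg θ p hθ0 hθ1 hp t ht
    have hr : (0:ℝ) ≤ t ^ (-θ - 1) := (rpow_pos_of_pos ht0 _).le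
    have : F1aux θ p t * (t * t ^ (-θ - 1)) + Faux θ p t * (-θ * t ^ (-θ - 1))
        = (t * F1aux θ p t - θ * Faux θ p t) * t ^ (-θ - 1) := by ring
    rw [this]
    exact div_nonneg (mul_nonneg key hr) (by linarith)
  · intro t ht
    have ht0 : (0:ℝ) < t := lt_of_lt_of_le one_pos ht
    rw [hh t, h_eq θ p t ht0 hp]
    exact div_nonneg (mul_nonneg (Faux_nonneg θ p hθ0 hθ1 hp t ht)
      (rpow_pos_of_pos ht0 _).le) (by linarith)
end

section
/- (Stampacchia's lemma) Let φ : [k₀, ∞) → [0, ∞) be nonincreasing and suppose there exist constants C > 0, α > 0, and ε > 0 such that for all h > k ≥ k₀, φ(h) ≤ C·φ(k)^{1+ε}/(h−k)^α. Then there exists d > 0 such that φ(k₀ + d) = 0; explicitly one may take d^α = C·φ(k₀)^ε·2^{α(1+ε)/ε}. -/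
open Real Filter

theorem stmt_7 (k₀ C α ε : ℝ) (hC : 0 < C) (hα : 0 < α) (hε : 0 < ε)
    (φ : ℝ → ℝ) (hnonneg : ∀ k, k₀ ≤ k → 0 ≤ φ k)
    (hmono : ∀ k h : ℝ, k₀ ≤ k → k ≤ h → φ h ≤ φ k)
    (hdecay : ∀ h k : ℝ, k₀ ≤ k → k < h → φ h ≤ C * φ k ^ (1 + ε) / (h - k) ^ α) :
    ∃ d : ℝ, 0 ≤ d ∧ d ^ α = C * φ k₀ ^ ε * 2 ^ (α * (1 + ε) / ε) ∧
      φ (k₀ + d) = 0 := by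
  by_cases hP : φ k₀ = 0
  · refine ⟨0, le_refl 0, ?_, ?_⟩
    · rw [Real.zero_rpow hα.ne', hP, Real.zero_rpow hε.ne']; ring
    · rw [add_zero, hP]
  have hP' : 0 < φ k₀ := lt_of_le_of_ne (hnonneg k₀ le_rfl) (Ne.symm hP)
  set D : ℝ := C * φ k₀ ^ ε * 2 ^ (α * (1 + ε) / ε) with hDdef
  have hD : 0 < D := by positivity
  set d : ℝ := D ^ (1 / α) with hddef
  have hd : 0 < d := Real.rpow_pos_of_pos hD _
  have hdα : d ^ α = D := by
    rw [hddef, ← Real.rpow_mul hD.le, one_div_mul_cancel hα.ne', Real.rpow_one]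
  set r : ℝ := 2 ^ (-(α / ε)) with hrdef
  have hr0 : 0 < r := Real.rpow_pos_of_pos two_pos _
  have hr1 : r < 1 := by
    apply Real.rpow_lt_one_of_one_lt_of_neg one_lt_two
    have : 0 < α / ε := by positivity
    linarith
  -- key identity for the induction step
  have hlogd : Real.log d = (1 / α) * (Real.log C + ε * Real.log (φ k₀)
      + (α * (1 + ε) / ε) * Real.log 2) := by
    rw [hddef, Real.log_rpow hD, hDdef, Real.log_mul (by positivity) (by positivity),
      Real.log_mul hC.ne' (by positivity), Real.log_rpow hP', Real.log_rpow two_pos]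
  have heq : ∀ n : ℕ, C * (φ k₀ * r ^ n) ^ (1 + ε) / (d * (1 / 2 : ℝ) ^ (n + 1)) ^ α
      = φ k₀ * r ^ (n + 1) := by
    intro n
    have hb1 : (0:ℝ) < φ k₀ * r ^ n := by positivity
    have hb2 : (0:ℝ) < d * (1 / 2 : ℝ) ^ (n + 1) := by positivity
    have hL : (0:ℝ) < C * (φ k₀ * r ^ n) ^ (1 + ε) / (d * (1/2 : ℝ) ^ (n + 1)) ^ α := by
      have := Real.rpow_pos_of_pos hb1 (1 + ε)
      have := Real.rpow_pos_of_pos hb2 α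
      positivity
    have hR : (0:ℝ) < φ k₀ * r ^ (n + 1) := by positivity
    rw [← Real.exp_log hL, ← Real.exp_log hR]
    congr 1
    rw [Real.log_div (by positivity) (Real.rpow_pos_of_pos hb2 α).ne',
      Real.log_mul hC.ne' (Real.rpow_pos_of_pos hb1 (1+ε)).ne',
      Real.log_rpow hb1, Real.log_rpow hb2,
      Real.log_mul hP'.ne' (by positivity),
      Real.log_mul hP'.ne' (by positivity),
      Real.log_mul hd.ne' (by positivity),
      Real.log_pow, Real.log_pow, Real.log_pow, hlogd,
      hrdef, Real.log_rpow two_pos]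
    have hlog_half : Real.log (1/2 : ℝ) = -Real.log 2 := by
      rw [one_div, Real.log_inv]
    rw [hlog_half]
    push_cast
    field_simp
    ring
  -- induction: φ (k₀ + d * (1 - (1/2)^n)) ≤ φ k₀ * r ^ n
  have key : ∀ n : ℕ, φ (k₀ + d * (1 - (1/2 : ℝ) ^ n)) ≤ φ k₀ * r ^ n := by
    intro n
    induction n with
    | zero => simp
    | succ n ih =>
      set k : ℝ := k₀ + d * (1 - (1/2 : ℝ) ^ n) with hk
      set h : ℝ := k₀ + d * (1 - (1/2 : ℝ) ^ (n + 1)) with hh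
      have hhalf : (0:ℝ) < (1/2 : ℝ) ^ n := by positivity
      have hhalf1 : (1/2 : ℝ) ^ n ≤ 1 := pow_le_one₀ (by norm_num) (by norm_num)
      have hk₀k : k₀ ≤ k := by
        rw [hk]; nlinarith
      have hkh : k < h := by
        rw [hk, hh]
        have : (1/2 : ℝ) ^ (n+1) < (1/2 : ℝ) ^ n := by
          rw [pow_succ]; nlinarith
        nlinarith
      have hsub : h - k = d * (1/2 : ℝ) ^ (n + 1) := by
        rw [hk, hh]; ring
      calc φ h ≤ C * φ k ^ (1 + ε) / (h - k) ^ α := hdecay h k hk₀k hkh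
        _ = C * φ k ^ (1 + ε) / (d * (1/2 : ℝ) ^ (n + 1)) ^ α := by rw [hsub]
        _ ≤ C * (φ k₀ * r ^ n) ^ (1 + ε) / (d * (1/2 : ℝ) ^ (n + 1)) ^ α := by
            have hpow : φ k ^ (1 + ε) ≤ (φ k₀ * r ^ n) ^ (1 + ε) :=
              Real.rpow_le_rpow (hnonneg k hk₀k) ih (by linarith)
            gcongr
        _ = φ k₀ * r ^ (n + 1) := heq n
  -- pass to the limit
  refine ⟨d, hd.le, by rw [hdα], ?_⟩
  have hle : ∀ n : ℕ, φ (k₀ + d) ≤ φ k₀ * r ^ n := by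
    intro n
    refine le_trans (hmono _ _ ?_ ?_) (key n)
    · have hhalf1 : (1/2 : ℝ) ^ n ≤ 1 := pow_le_one₀ (by norm_num) (by norm_num)
      nlinarith
    · have hhalf : (0:ℝ) ≤ (1/2 : ℝ) ^ n := by positivity
      nlinarith
  have htend : Tendsto (fun n : ℕ => φ k₀ * r ^ n) atTop (nhds 0) := by
    have := tendsto_pow_atTop_nhds_zero_of_lt_one hr0.le hr1
    simpa using this.const_mul (φ k₀)
  have h1 : φ (k₀ + d) ≤ 0 := ge_of_tendsto htend (Eventually.of_forall hle)
  have h2 : 0 ≤ φ (k₀ + d) := hnonneg _ (by linarith)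
  linarith
end

section
/- Let 0 < θ < 1, N > 2, 0 ≤ γ < 2, A ≥ 0, R > 0, β = 1. Define B(t) = ((1+t)^{1−θ}−1)/(1−θ), F(v) = B^{−1}(v)/(1+B^{−1}(v))^θ. Then there exists a unique v_R ≥ 0 with F(v_R) = (A/(N−γ))R^{1−γ}, and the function u(r) = B^{−1}(v_R + (A/(N−γ))(R^{2−γ}−r^{2−γ})/(2−γ)) is a bounded, nonnegative, radially decreasing classical solution of −div((1+u)^{−θ}∇u) = A/|x|^γ in B_R with (1+u)^{−θ}∂u/∂ν + β·(1+u)^{−θ}u = 0 on ∂B_R. -/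
open Real Set
open Topology Filter

theorem stmt_18 (θ N γ A R β : ℝ)
    (hθ0 : 0 < θ) (hθ1 : θ < 1) (hN : 2 < N) (hγ0 : 0 ≤ γ) (hγ2 : γ < 2)
    (hA : 0 ≤ A) (hR : 0 < R) (hβ : β = 1)
    (Binv : ℝ → ℝ) (hBinv : ∀ v, 0 ≤ v → Binv v = (1 + (1 - θ) * v) ^ (1 / (1 - θ)) - 1)
    (F : ℝ → ℝ) (hF : ∀ v, 0 ≤ v → F v = Binv v / (1 + Binv v) ^ θ) :
    (∃! vR : ℝ, 0 ≤ vR ∧ F vR = (A / (N - γ)) * R ^ (1 - γ)) ∧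
    ∀ vR : ℝ, 0 ≤ vR → F vR = (A / (N - γ)) * R ^ (1 - γ) →
      ∀ u : ℝ → ℝ,
        (∀ r, u r = Binv (vR + (A / (N - γ)) * (R ^ (2 - γ) - r ^ (2 - γ)) / (2 - γ))) →
        -- u is nonnegative, bounded and radially decreasing
        (∀ r, r ∈ Icc 0 R → 0 ≤ u r) ∧
        (∃ M : ℝ, ∀ r, r ∈ Icc 0 R → u r ≤ M) ∧
        AntitoneOn u (Icc 0 R) ∧
        -- u solves the radial degenerate equation −div((1+u)^{−θ}∇u) = A/r^γ in (0,R)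
        (∀ r, r ∈ Ioo 0 R →
          -(deriv (fun ρ => (1 + u ρ) ^ (-θ) * deriv u ρ) r)
            - ((N - 1) / r) * ((1 + u r) ^ (-θ) * deriv u r) = A / r ^ γ) ∧
        -- Robin boundary condition (1+u)^{−θ} u' + β (1+u)^{−θ} u = 0 at r = R
        (1 + u R) ^ (-θ) * deriv u R + β * ((1 + u R) ^ (-θ) * u R) = 0 := by
  constructor
  ·
      have hs : (0:ℝ) < 1 - θ := by linarith
      have hs0 : (1:ℝ) - θ ≠ 0 := ne_of_gt hs
      -- explicit form of F
      have Fexp : ∀ v : ℝ, 0 ≤ v →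
          F v = (1 + (1 - θ) * v) - (1 + (1 - θ) * v) ^ (-(θ / (1 - θ))) := by
        intro v hv
        have hb : (1:ℝ) ≤ 1 + (1 - θ) * v := by nlinarith
        have hbp : (0:ℝ) < 1 + (1 - θ) * v := by linarith
        have hw : (1:ℝ) ≤ (1 + (1 - θ) * v) ^ (1 / (1 - θ)) :=
          Real.one_le_rpow hb (by positivity)
        have hwp : (0:ℝ) < (1 + (1 - θ) * v) ^ (1 / (1 - θ)) := by linarith
        rw [hF v hv, hBinv v hv]
        have h1 : 1 + ((1 + (1 - θ) * v) ^ (1 / (1 - θ)) - 1)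
            = (1 + (1 - θ) * v) ^ (1 / (1 - θ)) := by ring
        rw [h1, div_eq_mul_inv, ← Real.rpow_neg hwp.le, sub_mul]
        nth_rewrite 1 [← Real.rpow_one ((1 + (1 - θ) * v) ^ (1 / (1 - θ)))]
        rw [← Real.rpow_add hwp, ← Real.rpow_mul hbp.le, ← Real.rpow_mul hbp.le]
        have e1 : 1 / (1 - θ) * (1 + -θ) = 1 := by field_simp; ring
        have e2 : 1 / (1 - θ) * (-θ) = -(θ / (1 - θ)) := by field_simp
        rw [e1, e2, Real.rpow_one]
        rw [one_mul]
      have Fmono : StrictMonoOn F (Ici 0) := by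
        intro x hx y hy hxy
        rw [Fexp x hx, Fexp y hy]
        have hbx : (1:ℝ) ≤ 1 + (1 - θ) * x := by
          simp only [mem_Ici] at hx; nlinarith
        have hby : (1:ℝ) ≤ 1 + (1 - θ) * y := by
          simp only [mem_Ici] at hy; nlinarith
        have hlt : 1 + (1 - θ) * x < 1 + (1 - θ) * y := by nlinarith
        have h2 : (1 + (1 - θ) * y) ^ (-(θ / (1 - θ))) ≤ (1 + (1 - θ) * x) ^ (-(θ / (1 - θ))) := by
          rw [Real.rpow_neg (by linarith), Real.rpow_neg (by linarith)]
          have := Real.rpow_le_rpow (by linarith : (0:ℝ) ≤ 1 + (1-θ)*x) hlt.le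
            (by positivity : (0:ℝ) ≤ θ / (1 - θ))
          exact inv_anti₀ (by positivity) this
        linarith
      have hc0 : (0:ℝ) ≤ (A / (N - γ)) * R ^ (1 - γ) := by
        have : (0:ℝ) < N - γ := by linarith
        positivity
      set c₀ := (A / (N - γ)) * R ^ (1 - γ) with hc₀def
      have Flb : ∀ v : ℝ, 0 ≤ v → (1 - θ) * v ≤ F v := by
        intro v hv
        rw [Fexp v hv]
        have hb : (1:ℝ) ≤ 1 + (1 - θ) * v := by nlinarith
        linarith [Real.rpow_le_one_of_one_le_of_nonpos hb
          (neg_nonpos.mpr (by positivity : (0:ℝ) ≤ θ / (1 - θ)))]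
      set v₁ := c₀ / (1 - θ) with hv₁def
      have hv₁ : 0 ≤ v₁ := by positivity
      have hFv₁ : c₀ ≤ F v₁ := by
        have := Flb v₁ hv₁
        rwa [hv₁def, mul_div_cancel₀ _ hs0] at this
      have hF0 : F 0 = 0 := by
        rw [Fexp 0 le_rfl]; simp
      have hcont : ContinuousOn F (Icc 0 v₁) := by
        have : ContinuousOn (fun v : ℝ => (1 + (1 - θ) * v) - (1 + (1 - θ) * v) ^ (-(θ / (1 - θ))))
            (Icc 0 v₁) := by
          apply ContinuousOn.sub
          · fun_prop
          · apply ContinuousOn.rpow_const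
            · fun_prop
            · intro x hx
              left
              have : 0 ≤ x := hx.1
              nlinarith
        exact ContinuousOn.congr this (fun x hx => Fexp x hx.1)
      have hmem : c₀ ∈ Icc (F 0) (F v₁) := ⟨by rw [hF0]; exact hc0, hFv₁⟩
      obtain ⟨vR, hvRmem, hvReq⟩ := intermediate_value_Icc hv₁ hcont hmem
      refine ⟨vR, ⟨hvRmem.1, hvReq⟩, ?_⟩
      intro y hy
      exact Fmono.injOn hy.1 hvRmem.1 (by rw [hy.2, hvReq])
  ·
      have hs : (0:ℝ) < 1 - θ := by linarith
      have hs0 : (1:ℝ) - θ ≠ 0 := ne_of_gt hs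
      have hNγ : (0:ℝ) < N - γ := by linarith
      have h2γ : (0:ℝ) < 2 - γ := by linarith
      intro vR hvR hFvR u hu
      set c := A / (N - γ) with hcdef
      have hc : 0 ≤ c := by positivity
      set g : ℝ → ℝ := fun ρ => vR + c * (R ^ (2 - γ) - ρ ^ (2 - γ)) / (2 - γ) with hgdef
      have hu' : ∀ r, u r = Binv (g r) := hu
      -- antitonicity of g
      have hganti : ∀ x y : ℝ, 0 ≤ x → x ≤ y → g y ≤ g x := by
        intro x y hx hxy
        have hp : x ^ (2 - γ) ≤ y ^ (2 - γ) := Real.rpow_le_rpow hx hxy h2γ.le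
        have hdiff : g x - g y = c * (y ^ (2 - γ) - x ^ (2 - γ)) / (2 - γ) := by
          simp only [hgdef]; ring
        have hnn : 0 ≤ g x - g y := by
          rw [hdiff]; exact div_nonneg (mul_nonneg hc (by linarith)) h2γ.le
        linarith
      -- g nonneg on [0,R]
      have hgnn : ∀ r : ℝ, r ∈ Icc 0 R → 0 ≤ g r := by
        intro r hr
        have := hganti r R hr.1 hr.2
        have hgR : g R = vR := by simp only [hgdef]; ring
        have := hganti 0 r le_rfl hr.1
        have hp : r ^ (2 - γ) ≤ R ^ (2 - γ) := Real.rpow_le_rpow hr.1 hr.2 h2γ.le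
        have : 0 ≤ c * (R ^ (2 - γ) - r ^ (2 - γ)) / (2 - γ) :=
          div_nonneg (mul_nonneg hc (by linarith)) h2γ.le
        simp only [hgdef]; linarith
      -- explicit formula for u
      have hu_exp : ∀ r : ℝ, 0 ≤ g r → u r = (1 + (1 - θ) * g r) ^ (1 / (1 - θ)) - 1 := by
        intro r hr
        rw [hu' r, hBinv _ hr]
      -- u nonneg where g nonneg
      have hu_nn : ∀ r : ℝ, 0 ≤ g r → 0 ≤ u r := by
        intro r hr
        rw [hu_exp r hr]
        have hb : (1:ℝ) ≤ 1 + (1 - θ) * g r := by nlinarith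
        have := Real.one_le_rpow hb (by positivity : (0:ℝ) ≤ 1 / (1 - θ))
        linarith
      have hnn : ∀ r, r ∈ Icc 0 R → 0 ≤ u r := fun r hr => hu_nn r (hgnn r hr)
      -- antitone
      have hanti : AntitoneOn u (Icc 0 R) := by
        intro x hx y hy hxy
        rw [hu_exp x (hgnn x hx), hu_exp y (hgnn y hy)]
        have hgy : 0 ≤ g y := hgnn y hy
        have hbb : 1 + (1 - θ) * g y ≤ 1 + (1 - θ) * g x := by
          have := hganti x y hx.1 hxy; nlinarith
        have := Real.rpow_le_rpow (by nlinarith : (0:ℝ) ≤ 1 + (1 - θ) * g y) hbb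
          (by positivity : (0:ℝ) ≤ 1 / (1 - θ))
        linarith
      -- derivative of g
      have hDg : ∀ ρ : ℝ, ρ ≠ 0 → HasDerivAt g (-c * ρ ^ (1 - γ)) ρ := by
        intro ρ hρ
        have h1 : HasDerivAt (fun x : ℝ => x ^ (2 - γ)) ((2 - γ) * ρ ^ (2 - γ - 1)) ρ :=
          Real.hasDerivAt_rpow_const (Or.inl hρ)
        have h2 := (((h1.const_sub (R ^ (2 - γ))).const_mul c).div_const (2 - γ)).const_add vR
        have hde : -c * ρ ^ (1 - γ) = c * -((2 - γ) * ρ ^ (2 - γ - 1)) / (2 - γ) := by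
          rw [show (2:ℝ) - γ - 1 = 1 - γ by ring]
          field_simp
        rw [hde]
        exact h2
      -- derivative of u
      have hDu : ∀ ρ : ℝ, 0 < ρ → (∀ᶠ x in 𝓝 ρ, 0 ≤ g x) →
          HasDerivAt u ((1 + (1 - θ) * g ρ) ^ (θ / (1 - θ)) * (-c * ρ ^ (1 - γ))) ρ := by
        intro ρ hρ hev
        have hgρ : 0 ≤ g ρ := hev.self_of_nhds
        have hb : (1:ℝ) ≤ 1 + (1 - θ) * g ρ := by nlinarith
        have h1 : HasDerivAt (fun x => 1 + (1 - θ) * g x) ((1 - θ) * (-c * ρ ^ (1 - γ))) ρ :=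
          ((hDg ρ (ne_of_gt hρ)).const_mul (1 - θ)).const_add 1
        have h2 := (h1.rpow_const (p := 1 / (1 - θ)) (Or.inl (ne_of_gt (show (0:ℝ) < 1 + (1 - θ) * g ρ by nlinarith)))).sub_const 1
        have heq : u =ᶠ[𝓝 ρ] fun x => (1 + (1 - θ) * g x) ^ (1 / (1 - θ)) - 1 :=
          hev.mono (fun x hx => hu_exp x hx)
        have h3 := h2.congr_of_eventuallyEq heq
        have hde : (1 + (1 - θ) * g ρ) ^ (θ / (1 - θ)) * (-c * ρ ^ (1 - γ))
            = (1 - θ) * (-c * ρ ^ (1 - γ)) * (1 / (1 - θ))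
              * (1 + (1 - θ) * g ρ) ^ (1 / (1 - θ) - 1) := by
          rw [show 1 / (1 - θ) - 1 = θ / (1 - θ) by field_simp; ring]
          field_simp
        rw [hde]
        exact h3
      -- key cancellation
      have hprod : ∀ ρ : ℝ, 0 ≤ g ρ →
          (1 + u ρ) ^ (-θ) * (1 + (1 - θ) * g ρ) ^ (θ / (1 - θ)) = 1 := by
        intro ρ hgρ
        have hb : (0:ℝ) < 1 + (1 - θ) * g ρ := by nlinarith
        have h1u : 1 + u ρ = (1 + (1 - θ) * g ρ) ^ (1 / (1 - θ)) := by
          rw [hu_exp ρ hgρ]; ring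
        rw [h1u, ← Real.rpow_mul hb.le, ← Real.rpow_add hb,
          show 1 / (1 - θ) * (-θ) + θ / (1 - θ) = 0 by field_simp; ring, Real.rpow_zero]
      -- flux value on the interior
      have hval : ∀ ρ : ℝ, ρ ∈ Ioo 0 R → (1 + u ρ) ^ (-θ) * deriv u ρ = -c * ρ ^ (1 - γ) := by
        intro ρ hρ
        have hev : ∀ᶠ x in 𝓝 ρ, 0 ≤ g x :=
          Filter.eventually_of_mem (isOpen_Ioo.mem_nhds hρ)
            (fun x hx => hgnn x (Ioo_subset_Icc_self hx))
        rw [(hDu ρ hρ.1 hev).deriv, ← mul_assoc,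
          hprod ρ (hgnn ρ (Ioo_subset_Icc_self hρ)), one_mul]
      refine ⟨hnn, ⟨u 0, fun r hr => hanti ⟨le_rfl, hR.le⟩ hr hr.1⟩, hanti, ?_, ?_⟩
      -- interior equation
      · intro r hr
        have hEq : (fun ρ => (1 + u ρ) ^ (-θ) * deriv u ρ) =ᶠ[𝓝 r]
            (fun ρ => -c * ρ ^ (1 - γ)) :=
          Filter.eventually_of_mem (isOpen_Ioo.mem_nhds hr) (fun x hx => hval x hx)
        have hd3 : HasDerivAt (fun ρ : ℝ => -c * ρ ^ (1 - γ)) (-c * ((1 - γ) * r ^ (1 - γ - 1))) r :=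
          (Real.hasDerivAt_rpow_const (Or.inl (ne_of_gt hr.1))).const_mul (-c)
        rw [hEq.deriv_eq, hd3.deriv, hval r hr]
        rw [show (1:ℝ) - γ - 1 = -γ by ring, show (1:ℝ) - γ = -γ + 1 by ring,
          Real.rpow_add hr.1, Real.rpow_one, div_eq_mul_inv A, ← Real.rpow_neg hr.1.le, hcdef]
        have hrne : r ≠ 0 := ne_of_gt hr.1
        field_simp
        ring
      -- boundary condition
      · have hgR : g R = vR := by simp only [hgdef, sub_self, mul_zero, zero_div, add_zero]
        have hgR0 : 0 ≤ g R := by rw [hgR]; exact hvR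
        have huR : u R = Binv vR := by rw [hu' R, hgR]
        have hevR : ∀ᶠ x in 𝓝 R, 0 ≤ g x := by
          rcases eq_or_lt_of_le hc with hc0 | hcpos
          · refine Filter.Eventually.of_forall (fun x => ?_)
            simp only [hgdef, ← hc0, zero_mul, zero_div, add_zero]
            exact hvR
          · have hvRpos : 0 < vR := by
              rcases eq_or_lt_of_le hvR with h0 | h0
              · exfalso
                have hB0 : Binv 0 = 0 := by rw [hBinv 0 le_rfl]; simp
                have hF0 : F 0 = 0 := by rw [hF 0 le_rfl, hB0]; simp
                rw [← h0, hF0] at hFvR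
                have : 0 < c * R ^ (1 - γ) := mul_pos hcpos (Real.rpow_pos_of_pos hR _)
                linarith
              · exact h0
            have hcont : ContinuousAt g R := by
              have h1 : ContinuousAt (fun x : ℝ => x ^ (2 - γ)) R :=
                Real.continuousAt_rpow_const R _ (Or.inl (ne_of_gt hR))
              exact continuousAt_const.add
                (((continuousAt_const.sub h1).const_mul c).div_const (2 - γ))
            have h0 : 0 < g R := by rwa [hgR]
            exact (hcont.eventually (eventually_gt_nhds h0)).mono (fun x hx => hx.le)
        have hd := hDu R hR hevR
        have hFval : (1 + u R) ^ (-θ) * u R = F vR := by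
          have hBnn : 0 ≤ Binv vR := by rw [← huR]; exact hu_nn R hgR0
          rw [hF vR hvR, huR, div_eq_mul_inv, ← Real.rpow_neg (by linarith), mul_comm]
        rw [hd.deriv, ← mul_assoc, hprod R hgR0, one_mul, hFval, hFvR, hβ]
        ring
end
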